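/- arXiv:2203.11923 — 2 statements merged into one kernel-verified Lean document; each statement's English description precedes it below -/
import Mathlib

section
/- Let M ∈ ℕ with M ≥ 1, let ℓ ≥ 2, let Δ > 0, τ > 0, and let h_1, …, h_ℓ ∈ ℝ with |h_i| ≤ τΔ for all i. Let B_1, …, B_ℓ ∈ ℂ and define, with D_M(ω) := Σ_{m=0}^{M} e^{2πi m ω}, the function R_B(ω) := (1/(2ℓ−2)!) · Σ_{i=1}^{ℓ} B_i ∫₀¹ D_M^{(2ℓ)}(ω + h_i r) (h_i − h_i r)^{2ℓ−2} h_i dr. Then ‖R_B‖_{L²(0,1)} ≤ (τΔ)^{2ℓ−1} · √(M+1) · (2πM)^{2ℓ} · (1/(2ℓ−1)!) · Σ_{i=1}^{ℓ} |B_i|. -/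
/-!
Differentiating `D_M` term by term multiplies its `m`-th mode by `(2πim)^{2ℓ}`, and the shift
`ω ↦ ω + h_i r` only multiplies that mode by the unimodular factor `e^{2πi m h_i r}`; hence `R_B`
is a trigonometric polynomial with frequencies `0, …, M`. By Parseval its squared `L²` norm is the
sum of the squares of its `M + 1` coefficients, and each coefficient is at most
`(2πM)^{2ℓ} (τΔ)^{2ℓ-1} / (2ℓ-1)! · Σ |B_i|`, because `∫₀¹ (1 - r)^{2ℓ-2} dr = 1 / (2ℓ - 1)`.
-/

open scoped BigOperators

/-- The modified Dirichlet kernel `D_M(ω) = Σ_{m=0}^{M} e^{2πi m ω}`. -/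
noncomputable def DirichletKer (M : ℕ) : ℝ → ℂ :=
  fun ω => ∑ m ∈ Finset.range (M + 1),
    Complex.exp (2 * (Real.pi : ℂ) * Complex.I * (m : ℂ) * (ω : ℂ))

/-- The Taylor remainder term
`R_B(ω) = (1/(2ℓ-2)!) Σ_i B_i ∫₀¹ D_M^{(2ℓ)}(ω + h_i r) (h_i - h_i r)^{2ℓ-2} h_i dr`. -/
noncomputable def RBterm (M ℓ : ℕ) (h : Fin ℓ → ℝ) (B : Fin ℓ → ℂ) (ω : ℝ) : ℂ :=
  (1 / ((2 * ℓ - 2).factorial : ℂ)) * ∑ i, B i *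
    ∫ r in (0 : ℝ)..1,
      iteratedDeriv (2 * ℓ) (DirichletKer M) (ω + h i * r) *
        ((h i - h i * r : ℝ) : ℂ) ^ (2 * ℓ - 2) * ((h i : ℝ) : ℂ)

open Complex ComplexConjugate intervalIntegral Finset

lemma hasDerivAt_cexp_const_mul_ofReal (c : ℂ) (x : ℝ) :
    HasDerivAt (fun y : ℝ => cexp (c * y)) (c * cexp (c * x)) x := by
  simpa [mul_comm] using (((hasDerivAt_id (x : ℂ)).const_mul c).cexp).comp_ofReal

lemma iteratedDeriv_sum_cexp {ι : Type*} (s : Finset ι) (a c : ι → ℂ) (n : ℕ) :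
    iteratedDeriv n (fun x : ℝ => ∑ m ∈ s, a m * cexp (c m * x)) =
      fun x : ℝ => ∑ m ∈ s, a m * c m ^ n * cexp (c m * x) := by
  induction n with
  | zero => simp
  | succ n ih =>
    funext x
    rw [iteratedDeriv_succ, ih]
    refine (HasDerivAt.fun_sum fun m _ =>
      ((hasDerivAt_cexp_const_mul_ofReal (c m) x).const_mul (a m * c m ^ n)).congr_deriv
        (by ring)).deriv

noncomputable def fourierFreq (m : ℤ) : ℂ := 2 * Real.pi * I * m

lemma norm_fourierFreq (m : ℤ) : ‖fourierFreq m‖ = 2 * Real.pi * |m| := by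
  simp [fourierFreq, abs_of_pos Real.pi_pos]

lemma norm_cexp_fourierFreq_mul (m : ℤ) (x : ℝ) : ‖cexp (fourierFreq m * x)‖ = 1 := by
  rw [show fourierFreq m * x = ((2 * Real.pi * m * x : ℝ) : ℂ) * I by
    simp only [fourierFreq]; push_cast; ring]
  exact norm_exp_ofReal_mul_I _

lemma iteratedDeriv_dirichletKer (M n : ℕ) :
    iteratedDeriv n (DirichletKer M) =
      fun x : ℝ => ∑ m ∈ range (M + 1), fourierFreq m ^ n * cexp (fourierFreq m * x) := by
  have hD : DirichletKer M = fun x : ℝ => ∑ m ∈ range (M + 1), 1 * cexp (fourierFreq m * x) := by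
    funext x
    simp [DirichletKer, fourierFreq, mul_assoc]
  rw [hD, iteratedDeriv_sum_cexp]
  simp

lemma integral_cexp_fourierFreq_mul (n : ℤ) :
    ∫ ω in (0 : ℝ)..1, cexp (fourierFreq n * ω) = if n = 0 then 1 else 0 := by
  split_ifs with hn
  · simp [hn, fourierFreq]
  · have hne : fourierFreq n ≠ 0 := by simp [fourierFreq, hn, Real.pi_ne_zero]
    rw [integral_exp_mul_complex hne, ofReal_one, mul_one, ofReal_zero, mul_zero, exp_zero,
      show fourierFreq n = n * (2 * Real.pi * I) by simp only [fourierFreq]; ring,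
      exp_int_mul_two_pi_mul_I, sub_self, zero_div]

lemma cexp_fourierFreq_mul_conj (m k : ℕ) (x : ℝ) :
    cexp (fourierFreq m * x) * conj (cexp (fourierFreq k * x)) =
      cexp (fourierFreq ((m : ℤ) - k) * x) := by
  rw [← exp_conj, ← exp_add]
  congr 1
  simp only [fourierFreq, map_mul, conj_I, conj_ofReal, map_ofNat, map_intCast]
  push_cast
  ring

lemma integral_norm_sq_sum_cexp_fourierFreq (s : Finset ℕ) (a : ℕ → ℂ) :
    ∫ ω in (0 : ℝ)..1, ‖∑ m ∈ s, a m * cexp (fourierFreq m * ω)‖ ^ 2 = ∑ m ∈ s, ‖a m‖ ^ 2 := by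
  apply ofReal_injective
  calc ((∫ ω in (0 : ℝ)..1, ‖∑ m ∈ s, a m * cexp (fourierFreq m * ω)‖ ^ 2 : ℝ) : ℂ)
      = ∫ ω in (0 : ℝ)..1, ∑ m ∈ s, ∑ k ∈ s,
          a m * conj (a k) * cexp (fourierFreq ((m : ℤ) - k) * ω) := by
        rw [← intervalIntegral.integral_ofReal]
        refine integral_congr fun ω _ => ?_
        push_cast
        rw [← mul_conj', map_sum, sum_mul_sum]
        refine sum_congr rfl fun m _ => sum_congr rfl fun k _ => ?_
        rw [map_mul, ← cexp_fourierFreq_mul_conj]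
        ring
    _ = ∑ m ∈ s, ∑ k ∈ s, a m * conj (a k) * if (m : ℤ) - k = 0 then 1 else 0 := by
        rw [integral_finsetSum fun m _ => (by fun_prop : Continuous _).intervalIntegrable 0 1]
        refine sum_congr rfl fun m _ => ?_
        rw [integral_finsetSum fun k _ => (by fun_prop : Continuous _).intervalIntegrable 0 1]
        simp only [integral_const_mul, integral_cexp_fourierFreq_mul]
    _ = ∑ m ∈ s, ‖a m‖ ^ 2 := by
        push_cast
        simp [sub_eq_zero, mul_conj']

lemma integral_iteratedDeriv_dirichletKer_mul (M n : ℕ) (ω a : ℝ) {w : ℝ → ℂ}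
    (hw : Continuous w) :
    ∫ r in (0 : ℝ)..1, iteratedDeriv n (DirichletKer M) (ω + a * r) * w r =
      ∑ m ∈ range (M + 1), (fourierFreq m ^ n *
        ∫ r in (0 : ℝ)..1, cexp (fourierFreq m * (a * r : ℝ)) * w r) *
          cexp (fourierFreq m * ω) := by
  simp_rw [iteratedDeriv_dirichletKer, sum_mul]
  rw [integral_finsetSum fun m _ => (by fun_prop : Continuous _).intervalIntegrable 0 1]
  refine sum_congr rfl fun m _ => ?_
  rw [← integral_const_mul, ← integral_mul_const]
  refine integral_congr fun r _ => ?_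
  rw [ofReal_add, mul_add, exp_add]
  ring

noncomputable def RBcoeff (ℓ : ℕ) (h : Fin ℓ → ℝ) (B : Fin ℓ → ℂ) (m : ℕ) : ℂ :=
  (1 / ((2 * ℓ - 2).factorial : ℂ)) * ∑ i, B i * (fourierFreq m ^ (2 * ℓ) *
    ∫ r in (0 : ℝ)..1, cexp (fourierFreq m * (h i * r : ℝ)) *
      ((h i - h i * r : ℝ) : ℂ) ^ (2 * ℓ - 2) * (h i : ℂ))

lemma RBterm_eq_sum (M ℓ : ℕ) (h : Fin ℓ → ℝ) (B : Fin ℓ → ℂ) (ω : ℝ) :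
    RBterm M ℓ h B ω = ∑ m ∈ range (M + 1), RBcoeff ℓ h B m * cexp (fourierFreq m * ω) := by
  have hterm (i : Fin ℓ) := integral_iteratedDeriv_dirichletKer_mul M (2 * ℓ) ω (h i)
    (w := fun r => ((h i - h i * r : ℝ) : ℂ) ^ (2 * ℓ - 2) * (h i : ℂ)) (by fun_prop)
  simp only [← mul_assoc] at hterm
  simp only [RBterm, RBcoeff, hterm, mul_sum, sum_mul]
  rw [sum_comm]
  exact sum_congr rfl fun m _ => sum_congr rfl fun i _ => by ring

lemma norm_integral_mul_sub_mul_pow_mul_le {u : ℝ → ℂ} (hu : ∀ r, ‖u r‖ ≤ 1) (a : ℝ) (n : ℕ) :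
    ‖∫ r in (0 : ℝ)..1, u r * ((a - a * r : ℝ) : ℂ) ^ n * (a : ℂ)‖ ≤
      |a| ^ (n + 1) / (n + 1) := by
  have hpt (r : ℝ) (hr : r ∈ Set.Ioc (0 : ℝ) 1) :
      ‖u r * ((a - a * r : ℝ) : ℂ) ^ n * (a : ℂ)‖ ≤ |a| ^ (n + 1) * (1 - r) ^ n := by
    have h1r : 0 ≤ 1 - r := by linarith [hr.2]
    rw [norm_mul, norm_mul, norm_pow, norm_real, norm_real, Real.norm_eq_abs, Real.norm_eq_abs,
      show a - a * r = a * (1 - r) by ring, abs_mul, abs_of_nonneg h1r, mul_pow]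
    calc _ ≤ 1 * (|a| ^ n * (1 - r) ^ n) * |a| := by gcongr; exact hu r
      _ = _ := by ring
  calc _ ≤ ∫ r in (0 : ℝ)..1, |a| ^ (n + 1) * (1 - r) ^ n :=
        norm_integral_le_of_norm_le zero_le_one (MeasureTheory.ae_of_all _ hpt)
          ((by fun_prop : Continuous _).intervalIntegrable 0 1)
    _ = |a| ^ (n + 1) / (n + 1) := by
        rw [integral_const_mul, intervalIntegral.integral_comp_sub_left (fun x : ℝ => x ^ n)]
        norm_num [integral_pow]
        ring

lemma norm_RBcoeff_le {ℓ : ℕ} (hℓ : 1 ≤ ℓ) {h : Fin ℓ → ℝ} {ρ : ℝ} (hh : ∀ i, |h i| ≤ ρ)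
    (B : Fin ℓ → ℂ) {m M : ℕ} (hm : m ≤ M) :
    ‖RBcoeff ℓ h B m‖ ≤
      ρ ^ (2 * ℓ - 1) * (2 * Real.pi * M) ^ (2 * ℓ) * (1 / ((2 * ℓ - 1).factorial : ℝ)) *
        ∑ i, ‖B i‖ := by
  obtain ⟨k, rfl⟩ : ∃ k, ℓ = k + 1 := ⟨ℓ - 1, by omega⟩
  rw [show 2 * (k + 1) - 1 = 2 * k + 1 by omega]
  have hterm (i : Fin (k + 1)) :
      ‖B i * (fourierFreq m ^ (2 * (k + 1)) *
        ∫ r in (0 : ℝ)..1, cexp (fourierFreq m * (h i * r : ℝ)) *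
          ((h i - h i * r : ℝ) : ℂ) ^ (2 * (k + 1) - 2) * (h i : ℂ))‖ ≤
        ‖B i‖ * ((2 * Real.pi * M) ^ (2 * (k + 1)) * (ρ ^ (2 * k + 1) / (2 * k + 1))) := by
    rw [norm_mul, norm_mul, norm_pow, norm_fourierFreq, show 2 * (k + 1) - 2 = 2 * k by omega]
    gcongr
    · simpa using hm
    · calc _ ≤ |h i| ^ (2 * k + 1) / (2 * k + 1) := by
            exact_mod_cast norm_integral_mul_sub_mul_pow_mul_le
              (fun r => (norm_cexp_fourierFreq_mul m _).le) (h i) (2 * k)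
        _ ≤ ρ ^ (2 * k + 1) / (2 * k + 1) := by gcongr; exact hh i
  calc ‖RBcoeff (k + 1) h B m‖
      ≤ 1 / (2 * k).factorial * ∑ i, ‖B i‖ *
          ((2 * Real.pi * M) ^ (2 * (k + 1)) * (ρ ^ (2 * k + 1) / (2 * k + 1))) := by
        rw [RBcoeff, norm_mul, show 2 * (k + 1) - 2 = 2 * k by omega]
        simp only [norm_div, norm_one, norm_natCast]
        gcongr
        exact (norm_sum_le _ _).trans (sum_le_sum fun i _ => hterm i)
    _ = _ := by
        rw [← sum_mul, Nat.factorial_succ]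
        push_cast
        field_simp

theorem RB_L2_bound_general (M ℓ : ℕ) (hℓ : 2 ≤ ℓ) (Δ τ : ℝ)
    (h : Fin ℓ → ℝ) (hh : ∀ i, |h i| ≤ τ * Δ) (B : Fin ℓ → ℂ) :
    Real.sqrt (∫ ω in (0 : ℝ)..1, ‖RBterm M ℓ h B ω‖ ^ 2) ≤
      (τ * Δ) ^ (2 * ℓ - 1) * Real.sqrt ((M : ℝ) + 1) * (2 * Real.pi * M) ^ (2 * ℓ) *
        (1 / ((2 * ℓ - 1).factorial : ℝ)) * ∑ i, ‖B i‖ := by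
  set C := (τ * Δ) ^ (2 * ℓ - 1) * (2 * Real.pi * M) ^ (2 * ℓ) *
    (1 / ((2 * ℓ - 1).factorial : ℝ)) * ∑ i, ‖B i‖
  have hcoeff (m : ℕ) (hm : m ∈ range (M + 1)) : ‖RBcoeff ℓ h B m‖ ≤ C :=
    norm_RBcoeff_le (by omega) hh B (mem_range_succ_iff.1 hm)
  have hC : 0 ≤ C := (norm_nonneg _).trans (hcoeff 0 (by simp))
  calc Real.sqrt (∫ ω in (0 : ℝ)..1, ‖RBterm M ℓ h B ω‖ ^ 2)
      = Real.sqrt (∑ m ∈ range (M + 1), ‖RBcoeff ℓ h B m‖ ^ 2) := by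
        simp_rw [RBterm_eq_sum, integral_norm_sq_sum_cexp_fourierFreq]
    _ ≤ Real.sqrt (∑ _m ∈ range (M + 1), C ^ 2) := by
        gcongr with m hm
        exact hcoeff m hm
    _ = Real.sqrt ((M : ℝ) + 1) * C := by
        rw [sum_const, card_range, nsmul_eq_mul, Real.sqrt_mul (by positivity), Real.sqrt_sq hC,
          Nat.cast_succ]
    _ = _ := by ring

/-- Lemma (bound on the remainder `R_B`):
`‖R_B‖_{L²(0,1)} ≤ (τΔ)^{2ℓ-1} √(M+1) (2πM)^{2ℓ} (1/(2ℓ-1)!) Σ_i |B_i|`. -/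
theorem RB_L2_bound (M ℓ : ℕ) (hM : 1 ≤ M) (hℓ : 2 ≤ ℓ) (Δ τ : ℝ) (hΔ : 0 < Δ) (hτ : 0 < τ)
    (h : Fin ℓ → ℝ) (hh : ∀ i, |h i| ≤ τ * Δ) (B : Fin ℓ → ℂ) :
    Real.sqrt (∫ ω in (0 : ℝ)..1, ‖RBterm M ℓ h B ω‖ ^ 2) ≤
      (τ * Δ) ^ (2 * ℓ - 1) * Real.sqrt ((M : ℝ) + 1) * (2 * Real.pi * M) ^ (2 * ℓ) *
        (1 / ((2 * ℓ - 1).factorial : ℝ)) * ∑ i, ‖B i‖ :=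
  RB_L2_bound_general M ℓ hℓ Δ τ h hh B
end

section
/- For all integers ℓ ≥ 2 and reals τ ≥ 1 there exists a constant C_B = C_B(ℓ, τ) > 0 as follows. Let M ≥ 1 be an integer, let 0 < α ≤ 1, and let 0 = τ_1 < τ_2 < … < τ_ℓ ≤ τ be reals with |τ_i − τ_j| ≥ 1 for all i ≠ j. Set h_i := −τ_i·(α/M), and let (A_1, …, A_ℓ, B_1, …, B_ℓ) be the unique solution of the linear system U_{2ℓ}(h)·(A; B)ᵀ = (0, …, 0, (2ℓ−1)!)ᵀ. Then Σ_{i=1}^{ℓ} |B_i| ≤ C_B · (M/α)^{2ℓ−2}. -/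
/-!
Pairing the system with the coefficients of a polynomial `P` of degree `< 2ℓ` gives
`∑ⱼ (Aⱼ P(hⱼ) + Bⱼ P'(hⱼ)) = (2ℓ-1)! · [X^{2ℓ-1}] P`. For `P = (X - hᵢ) ∏_{j ≠ i} (X - hⱼ)²`,
which is monic of degree `2ℓ - 1`, vanishes at every node, and whose derivative vanishes at every
node except `hᵢ`, this isolates `Bᵢ ∏_{j ≠ i} (hᵢ - hⱼ)² = (2ℓ-1)!`. The nodes are
`α/M`-separated, so `|Bᵢ| ≤ (2ℓ-1)! (M/α)^{2ℓ-2}`.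
-/

open scoped BigOperators

/-- The square `2ℓ × 2ℓ` confluent Vandermonde matrix `U_{2ℓ}(h)`: rows `k = 0, …, 2ℓ-1`,
entry `h_j^k` in column `j` and `k h_j^{k-1}` in column `ℓ + j`. -/
noncomputable def U2l (ℓ : ℕ) (h : Fin ℓ → ℝ) : Matrix (Fin (2 * ℓ)) (Fin ℓ ⊕ Fin ℓ) ℂ :=
  fun k => Sum.elim (fun j => ((h j : ℂ)) ^ (k : ℕ))
    (fun j => ((k : ℕ) : ℂ) * ((h j : ℂ)) ^ ((k : ℕ) - 1))

/-- The right-hand side `(0, …, 0, (2ℓ-1)!)ᵀ` of the finite-difference linear system. -/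
noncomputable def fdRhs (ℓ : ℕ) : Fin (2 * ℓ) → ℂ :=
  fun k => if (k : ℕ) = 2 * ℓ - 1 then ((2 * ℓ - 1).factorial : ℂ) else 0

open Polynomial Finset Matrix

theorem Polynomial.eval_derivative_eq_sum_range {R : Type*} [Semiring R] {P : R[X]} {n : ℕ}
    (hP : P.natDegree < n) (x : R) :
    P.derivative.eval x = ∑ k ∈ range n, P.coeff k * (k * x ^ (k - 1)) := by
  rw [derivative_eval, sum_over_range' _ (by simp) n hP]
  simp only [mul_assoc]

theorem U2l_mulVec_apply (ℓ : ℕ) (h : Fin ℓ → ℝ) (A B : Fin ℓ → ℂ) (k : Fin (2 * ℓ)) :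
    (U2l ℓ h *ᵥ Sum.elim A B) k =
      ∑ j, A j * (h j : ℂ) ^ (k : ℕ) + ∑ j, B j * ((k : ℕ) * (h j : ℂ) ^ ((k : ℕ) - 1)) := by
  simp only [Matrix.mulVec, dotProduct, Fintype.sum_sum_type, U2l, Sum.elim_inl, Sum.elim_inr,
    mul_comm]

theorem sum_coeff_mul_U2l_mulVec (ℓ : ℕ) (h : Fin ℓ → ℝ) (A B : Fin ℓ → ℂ) {P : ℂ[X]}
    (hP : P.natDegree < 2 * ℓ) :
    ∑ k : Fin (2 * ℓ), P.coeff k * (U2l ℓ h *ᵥ Sum.elim A B) k =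
      ∑ j, (A j * P.eval (h j : ℂ) + B j * P.derivative.eval (h j : ℂ)) := by
  simp only [U2l_mulVec_apply, mul_add, Finset.mul_sum, Finset.sum_add_distrib,
    eval_eq_sum_range' hP, eval_derivative_eq_sum_range hP]
  congr 1 <;> rw [Finset.sum_comm] <;> refine Finset.sum_congr rfl fun j _ => ?_ <;>
    rw [← Fin.sum_univ_eq_sum_range] <;> exact Finset.sum_congr rfl fun k _ => by ring

theorem sum_coeff_mul_fdRhs (ℓ : ℕ) (hℓ : 1 ≤ ℓ) (P : ℂ[X]) :
    ∑ k : Fin (2 * ℓ), P.coeff k * fdRhs ℓ k = P.coeff (2 * ℓ - 1) * (2 * ℓ - 1).factorial := by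
  rw [Fintype.sum_eq_single ⟨2 * ℓ - 1, by omega⟩]
  · simp [fdRhs]
  · intro k hk
    have : (k : ℕ) ≠ 2 * ℓ - 1 := fun h => hk (Fin.ext h)
    simp [fdRhs, this]

theorem Polynomial.eval_derivative_X_sub_C_mul_sq {R : Type*} [CommRing R] (a b : R)
    (Q : R[X]) :
    ((X - C a) * Q ^ 2).derivative.eval b =
      Q.eval b ^ 2 + (b - a) * (2 * Q.eval b * Q.derivative.eval b) := by
  simp only [derivative_mul, derivative_sub, derivative_X, derivative_C, derivative_pow,
    eval_add, eval_mul, eval_sub, eval_pow, eval_X, eval_C, eval_one, eval_zero]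
  ring

theorem fd_weight_B_mul_prod_sq (ℓ : ℕ) (hℓ : 1 ≤ ℓ) (h : Fin ℓ → ℝ) (A B : Fin ℓ → ℂ)
    (hsol : U2l ℓ h *ᵥ Sum.elim A B = fdRhs ℓ) (i : Fin ℓ) :
    B i * (∏ j ∈ univ.erase i, ((h i : ℂ) - h j)) ^ 2 = (2 * ℓ - 1).factorial := by
  set Q : ℂ[X] := ∏ j ∈ univ.erase i, (X - C (h j : ℂ))
  set P : ℂ[X] := (X - C (h i : ℂ)) * Q ^ 2
  have hQ_monic : Q.Monic := monic_prod_of_monic _ _ fun j _ => monic_X_sub_C _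
  have hQ_deg : Q.natDegree = ℓ - 1 := by
    rw [natDegree_prod_of_monic _ _ fun j _ => monic_X_sub_C _]
    simp [card_erase_of_mem]
  have hP_monic : P.Monic := (monic_X_sub_C _).mul (hQ_monic.pow 2)
  have hP_deg : P.natDegree = 2 * ℓ - 1 := by
    rw [(monic_X_sub_C _).natDegree_mul (hQ_monic.pow 2), natDegree_X_sub_C,
      hQ_monic.natDegree_pow, hQ_deg]
    omega
  have hQ_root : ∀ j ≠ i, Q.eval (h j : ℂ) = 0 := fun j hj => by
    rw [eval_prod]
    exact prod_eq_zero (mem_erase.2 ⟨hj, mem_univ j⟩) (by simp)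
  have hP_root : ∀ j, P.eval (h j : ℂ) = 0 := fun j => by
    by_cases hj : j = i
    · simp [P, hj]
    · simp [P, hQ_root j hj]
  have hP'_eval : ∀ j, B j * P.derivative.eval (h j : ℂ) =
      if j = i then B i * Q.eval (h i : ℂ) ^ 2 else 0 := fun j => by
    rw [eval_derivative_X_sub_C_mul_sq]
    split_ifs with hj
    · simp [hj]
    · simp [hQ_root j hj]
  calc B i * (∏ j ∈ univ.erase i, ((h i : ℂ) - h j)) ^ 2
      = ∑ j, (A j * P.eval (h j : ℂ) + B j * P.derivative.eval (h j : ℂ)) := by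
        simp [hP_root, hP'_eval, Q, eval_prod]
    _ = ∑ k : Fin (2 * ℓ), P.coeff k * (U2l ℓ h *ᵥ Sum.elim A B) k :=
        (sum_coeff_mul_U2l_mulVec ℓ h A B (by omega)).symm
    _ = (2 * ℓ - 1).factorial := by
        rw [hsol, sum_coeff_mul_fdRhs ℓ hℓ, ← hP_deg, hP_monic.coeff_natDegree, one_mul]

theorem norm_fd_weight_B_le (ℓ : ℕ) (hℓ : 1 ≤ ℓ) (h : Fin ℓ → ℝ) (A B : Fin ℓ → ℂ)
    (hsol : U2l ℓ h *ᵥ Sum.elim A B = fdRhs ℓ) {s : ℝ} (hs : 0 < s)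
    (hsep : ∀ i j, i ≠ j → s ≤ |h i - h j|) (i : Fin ℓ) :
    ‖B i‖ ≤ (2 * ℓ - 1).factorial / s ^ (2 * ℓ - 2) := by
  have hnorm := congrArg norm (fd_weight_B_mul_prod_sq ℓ hℓ h A B hsol i)
  simp only [norm_mul, norm_pow, norm_prod, ← Complex.ofReal_sub, Complex.norm_real,
    Real.norm_eq_abs, Complex.norm_natCast] at hnorm
  have hprod : s ^ (ℓ - 1) ≤ ∏ j ∈ univ.erase i, |h i - h j| := by
    simpa [card_erase_of_mem] using
      prod_le_prod (s := univ.erase i) (fun _ _ => hs.le) fun j hj =>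
        hsep i j (ne_of_mem_erase hj).symm
  rw [le_div_iff₀ (by positivity)]
  calc ‖B i‖ * s ^ (2 * ℓ - 2)
      = ‖B i‖ * (s ^ (ℓ - 1)) ^ 2 := by rw [← pow_mul]; congr 2; omega
    _ ≤ ‖B i‖ * (∏ j ∈ univ.erase i, |h i - h j|) ^ 2 := by gcongr
    _ = (2 * ℓ - 1).factorial := hnorm

/-- Lemma (bound on the finite-difference weights `B_i`): there is `C_B = C_B(ℓ, τ) > 0` such
that for nodes `h_i = -τ_i α/M` with `0 = τ_1 < … < τ_ℓ ≤ τ`, `|τ_i - τ_j| ≥ 1`, and the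
weights solving `U_{2ℓ}(h)(A; B)ᵀ = (0, …, 0, (2ℓ-1)!)ᵀ`, one has
`Σ_i |B_i| ≤ C_B (M/α)^{2ℓ-2}`. -/
theorem fd_weights_B_bound (ℓ : ℕ) (hℓ : 2 ≤ ℓ) (τ : ℝ) :
    ∃ C_B : ℝ, 0 < C_B ∧
      ∀ (M : ℕ), 1 ≤ M → ∀ α : ℝ, 0 < α → α ≤ 1 →
        ∀ t : Fin ℓ → ℝ, t ⟨0, by omega⟩ = 0 → StrictMono t → (∀ i, t i ≤ τ) →
          (∀ i j : Fin ℓ, i ≠ j → 1 ≤ |t i - t j|) →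
          ∀ A B : Fin ℓ → ℂ,
            (U2l ℓ (fun i => -(t i) * (α / M))).mulVec (Sum.elim A B) = fdRhs ℓ →
            ∑ i, ‖B i‖ ≤ C_B * ((M : ℝ) / α) ^ (2 * ℓ - 2) := by
  refine ⟨ℓ * (2 * ℓ - 1).factorial, by positivity, ?_⟩
  intro M hM α hα _ t _ _ _ ht_sep A B hsol
  have hs : 0 < α / M := div_pos hα (by exact_mod_cast hM)
  have hnode_sep : ∀ i j, i ≠ j → α / M ≤ |-(t i) * (α / M) - -(t j) * (α / M)| :=
    fun i j hij => by
      rw [show -(t i) * (α / M) - -(t j) * (α / M) = (t j - t i) * (α / M) by ring, abs_mul,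
        abs_of_pos hs, abs_sub_comm]
      exact le_mul_of_one_le_left hs.le (ht_sep i j hij)
  calc ∑ i, ‖B i‖ ≤ ∑ _i : Fin ℓ, (2 * ℓ - 1).factorial / (α / M) ^ (2 * ℓ - 2) :=
        sum_le_sum fun i _ => norm_fd_weight_B_le ℓ (by omega) _ A B hsol hs hnode_sep i
    _ = ℓ * (2 * ℓ - 1).factorial * ((M : ℝ) / α) ^ (2 * ℓ - 2) := by
        rw [sum_const, card_univ, Fintype.card_fin, nsmul_eq_mul, div_eq_mul_inv, ← inv_pow,
          inv_div]
        ring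
end
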